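/- arXiv:0712.2590 — 2 statements merged into one kernel-verified Lean document; each statement's English description precedes it below -/
import Mathlib

section
/- The signed spanning-tree sum of G^n satisfies: the sum over all spanning trees T' of G^n of (−1)^{v(T')} equals (−1)^n · ( x + (n+1)·y ), where x is the sum of (−1)^{v(T)} over spanning trees T of G containing e, and y is the sum of (−1)^{v(T)} over spanning trees T of G not containing e. -/
open Sum

/-- The set of spanning trees of a simple graph `H`: subgraphs (on the full
vertex set) that are trees. -/
def spanningTrees {X : Type*} (H : SimpleGraph X) : Set (SimpleGraph X) :=
  {T | T ≤ H ∧ T.IsTree}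

/-- The number of positive edges of `T` with respect to the sign function `σ`. -/
noncomputable def posCount {X : Type*} (σ : Sym2 X → ℤ) (T : SimpleGraph X) : ℕ :=
  {ed | ed ∈ T.edgeSet ∧ σ ed = 1}.ncard

/-- The graph `G^n`: delete the edge `{u, v}` and insert a path
`u — w₁ — ⋯ — wₙ — v` through `n` new vertices. -/
def subdiv {V : Type*} (G : SimpleGraph V) (u v : V) (n : ℕ) :
    SimpleGraph (V ⊕ Fin n) :=
  SimpleGraph.fromRel fun a b =>
    match a, b with
    | inl a, inl b => G.Adj a b ∧ s(a, b) ≠ s(u, v)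
    | inl a, inr i => (a = u ∧ (i : ℕ) = 0) ∨ (a = v ∧ (i : ℕ) = n - 1)
    | inr i, inr j => (j : ℕ) = (i : ℕ) + 1
    | inr _, inl _ => False

/-- The sign function on `G^n`: old edges keep their signs, and all
new (path) edges are positive. -/
noncomputable def subdivSign {V : Type*} {n : ℕ} (σ : Sym2 V → ℤ) :
    Sym2 (V ⊕ Fin n) → ℤ :=
  Sym2.lift ⟨fun a b =>
    match a, b with
    | inl a, inl b => σ s(a, b)
    | _, _ => (1 : ℤ),
    by rintro (a | i) (b | j) <;> simp only [] <;> rw [Sym2.eq_swap]⟩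

/-!
A spanning tree `T'` of `G^n` is determined by its restriction `C` to the old vertices and by
the set `K` of path edges it contains. As `C` is a forest on `V`, counting edges shows that `T'`
misses at most one path edge. If it misses none, `C + e` is a spanning tree of `G` through `e`;
if it misses exactly `e_k`, then `C` is a spanning tree of `G` avoiding `e`, and each such tree
arises once for each of the `n + 1` values of `k`. In both cases `T'` has exactly `n` more
positive edges than the corresponding tree of `G`.
-/

namespace SimpleGraph

variable {X Y : Type*} {A : SimpleGraph X} {B : SimpleGraph Y}

lemma Reachable.map_of_forall_adj (f : X → Y)
    (hf : ∀ x y, A.Adj x y → B.Reachable (f x) (f y)) {x y : X} (h : A.Reachable x y) :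
    B.Reachable (f x) (f y) := by
  rw [reachable_iff_reflTransGen] at h ⊢
  exact h.lift' f fun a b hab => (reachable_iff_reflTransGen _ _).1 (hf a b hab)

lemma IsAcyclic.card_edgeSet_add_one_le [Finite X] [Nonempty X] (h : A.IsAcyclic) :
    Nat.card A.edgeSet + 1 ≤ Nat.card X := by
  obtain ⟨T, hAT, -, hT⟩ := connected_top.exists_isTree_le_of_le_of_isAcyclic le_top h
  rw [← (isTree_iff_connected_and_card.1 hT).2, Nat.card_coe_set_eq, Nat.card_coe_set_eq]
  exact Nat.add_le_add_right (Set.ncard_le_ncard (edgeSet_mono hAT)) 1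

lemma card_edgeSet_deleteEdges_add_one [Finite X] {e : Sym2 X} (he : e ∈ A.edgeSet) :
    Nat.card (A.deleteEdges {e}).edgeSet + 1 = Nat.card A.edgeSet := by
  rw [Nat.card_coe_set_eq, Nat.card_coe_set_eq, edgeSet_deleteEdges,
    Set.ncard_sdiff_singleton_add_one he]

end SimpleGraph

lemma posCount_deleteEdges_add_one {X : Type*} [Finite X] (σ : Sym2 X → ℤ) {T : SimpleGraph X}
    {e : Sym2 X} (he : e ∈ T.edgeSet) (hσ : σ e = 1) :
    posCount σ (T.deleteEdges {e}) + 1 = posCount σ T := by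
  have hmem : e ∈ {x | x ∈ T.edgeSet ∧ σ x = 1} := ⟨he, hσ⟩
  have hdel : {x | x ∈ (T.deleteEdges {e}).edgeSet ∧ σ x = 1} =
      {x | x ∈ T.edgeSet ∧ σ x = 1} \ {e} := by
    ext
    simp only [SimpleGraph.edgeSet_deleteEdges, Set.mem_sdiff, Set.mem_ofPred_eq,
      Set.mem_singleton_iff]
    tauto
  rw [posCount, posCount, hdel, Set.ncard_sdiff_singleton_add_one hmem]

namespace Subdiv

open SimpleGraph Set

variable {V : Type*} {u v : V} {n : ℕ}

variable (u v n) in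
/-- `pathVert j` is the vertex `w_j` of the path `u = w₀, w₁, …, wₙ, wₙ₊₁ = v`, so that
`pathEdge k` is the paper's `e_k`. -/
def pathVert (j : ℕ) : V ⊕ Fin n :=
  if h : j = 0 then inl u else if hj : j ≤ n then inr ⟨j - 1, by omega⟩ else inl v

variable (u v n) in
def pathEdge (k : Fin (n + 1)) : Sym2 (V ⊕ Fin n) :=
  s(pathVert u v n k, pathVert u v n (k + 1))

@[simp] lemma pathVert_zero : pathVert u v n 0 = inl u := rfl

@[simp] lemma pathVert_succ (i : Fin n) : pathVert u v n (i + 1) = inr i := by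
  simp [pathVert, Nat.succ_le_of_lt i.isLt]

lemma pathVert_of_lt {j : ℕ} (h : n < j) : pathVert u v n j = inl v := by
  simp [pathVert, show j ≠ 0 by omega, show ¬ j ≤ n by omega]

lemma eq_of_pathVert_eq (huv : u ≠ v) {j l : ℕ} (hj : j ≤ n + 1) (hl : l ≤ n + 1)
    (h : pathVert u v n j = pathVert u v n l) : j = l := by
  unfold pathVert at h
  split_ifs at h <;> simp_all [Fin.ext_iff] <;> omega

lemma pathEdge_injective (huv : u ≠ v) : Function.Injective (pathEdge u v n) := by
  intro k l h
  rcases Sym2.eq_iff.1 h with ⟨h1, -⟩ | ⟨h1, h2⟩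
  · exact Fin.ext (eq_of_pathVert_eq huv (by omega) (by omega) h1)
  · have := eq_of_pathVert_eq huv (by omega) (by omega) h1
    have := eq_of_pathVert_eq huv (by omega) (by omega) h2
    omega

lemma not_isDiag_pathEdge (huv : u ≠ v) (k : Fin (n + 1)) : ¬ (pathEdge u v n k).IsDiag := by
  intro h
  have := eq_of_pathVert_eq huv (by omega) (by omega) (Sym2.mk_isDiag_iff.1 h)
  omega

lemma pathEdge_ne_map_inl (hn : 0 < n) (k : Fin (n + 1)) (e : Sym2 V) :
    pathEdge u v n k ≠ e.map inl := by
  induction e with | h a b => ?_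
  rw [Sym2.map_mk, pathEdge, Ne, Sym2.eq_iff]
  have := k.isLt
  unfold pathVert
  split_ifs <;> first | omega | simp_all

variable (u v n) in
def extend (T : SimpleGraph V) (K : Set (Fin (n + 1))) : SimpleGraph (V ⊕ Fin n) :=
  fromEdgeSet (Sym2.map inl '' (T.deleteEdges {s(u, v)}).edgeSet ∪ pathEdge u v n '' K)

variable (u v n) in
def pathSet (T' : SimpleGraph (V ⊕ Fin n)) : Set (Fin (n + 1)) :=
  {k | pathEdge u v n k ∈ T'.edgeSet}

lemma edgeSet_extend (huv : u ≠ v) (T : SimpleGraph V) (K : Set (Fin (n + 1))) :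
    (extend u v n T K).edgeSet =
      Sym2.map inl '' (T.deleteEdges {s(u, v)}).edgeSet ∪ pathEdge u v n '' K := by
  rw [extend, edgeSet_fromEdgeSet, sdiff_eq_left, Set.disjoint_left]
  rintro _ (⟨e, he, rfl⟩ | ⟨k, -, rfl⟩)
  · exact fun h => not_isDiag_of_mem_edgeSet _ he ((Sym2.isDiag_map inl_injective).1 h)
  · exact not_isDiag_pathEdge huv k

lemma extend_adj_inl (hn : 0 < n) {T : SimpleGraph V} {K : Set (Fin (n + 1))} {a b : V} :
    (extend u v n T K).Adj (inl a) (inl b) ↔ (T.deleteEdges {s(u, v)}).Adj a b := by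
  rw [extend, fromEdgeSet_adj, ← Sym2.map_mk, Set.mem_union,
    (Sym2.map.injective inl_injective).mem_set_image, mem_edgeSet]
  simp only [Set.mem_image, pathEdge_ne_map_inl hn, and_false, exists_false, or_false,
    ne_eq, inl.injEq, and_iff_left_iff_imp]
  exact Adj.ne

lemma comap_extend (hn : 0 < n) (T : SimpleGraph V) (K : Set (Fin (n + 1))) :
    (extend u v n T K).comap inl = T.deleteEdges {s(u, v)} := by
  ext a b
  exact extend_adj_inl hn

lemma pathEdge_mem_extend (huv : u ≠ v) (hn : 0 < n) {T : SimpleGraph V}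
    {K : Set (Fin (n + 1))} {k : Fin (n + 1)} :
    pathEdge u v n k ∈ (extend u v n T K).edgeSet ↔ k ∈ K := by
  rw [edgeSet_extend huv, Set.mem_union, (pathEdge_injective huv).mem_set_image]
  refine or_iff_right ?_
  rintro ⟨e, -, he⟩
  exact pathEdge_ne_map_inl hn k e he.symm

lemma pathSet_extend (huv : u ≠ v) (hn : 0 < n) (T : SimpleGraph V) (K : Set (Fin (n + 1))) :
    pathSet u v n (extend u v n T K) = K :=
  Set.ext fun _ => pathEdge_mem_extend huv hn

lemma extend_mono {T₁ T₂ : SimpleGraph V} {K₁ K₂ : Set (Fin (n + 1))} (hT : T₁ ≤ T₂)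
    (hK : K₁ ⊆ K₂) : extend u v n T₁ K₁ ≤ extend u v n T₂ K₂ :=
  fromEdgeSet_mono <| Set.union_subset_union
    (Set.image_mono (edgeSet_mono (deleteEdges_mono hT))) (Set.image_mono hK)

lemma notMem_image_map_inl (S : Set (Sym2 V)) {z : Sym2 (V ⊕ Fin n)} (i : Fin n)
    (h : inr i ∈ z) : z ∉ Sym2.map inl '' S := by
  rintro ⟨e, -, rfl⟩
  obtain ⟨a, -, ha⟩ := Sym2.mem_map.1 h
  simp at ha

lemma exists_pathEdge_eq_inl_inr {a : V} {j : Fin n} :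
    (∃ k, pathEdge u v n k = s(inl a, inr j)) ↔
      a = u ∧ (j : ℕ) = 0 ∨ a = v ∧ (j : ℕ) = n - 1 := by
  constructor
  · rintro ⟨k, hk⟩
    have := k.isLt
    simp only [pathEdge, pathVert] at hk
    split_ifs at hk <;> simp [Fin.ext_iff] at hk <;> grind
  · rintro (⟨rfl, hj⟩ | ⟨ha, hj⟩)
    · refine ⟨0, ?_⟩
      rw [pathEdge, Fin.val_zero, pathVert_zero, ← hj, pathVert_succ]
    · subst a
      have hjn : pathVert u v n n = inr j := by
        simpa [show (j : ℕ) + 1 = n by omega] using pathVert_succ (u := u) (v := v) j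
      refine ⟨Fin.last n, ?_⟩
      rw [pathEdge, Fin.val_last, hjn, pathVert_of_lt n.lt_succ_self, Sym2.eq_swap]

lemma exists_pathEdge_eq_inr_inr {i j : Fin n} :
    (∃ k, pathEdge u v n k = s(inr i, inr j)) ↔ (j : ℕ) = i + 1 ∨ (i : ℕ) = j + 1 := by
  constructor
  · rintro ⟨k, hk⟩
    have := k.isLt
    simp only [pathEdge, pathVert] at hk
    split_ifs at hk <;> simp [Fin.ext_iff] at hk
    omega
  · rintro (hj | hi)
    · refine ⟨⟨j, by omega⟩, ?_⟩
      rw [pathEdge, pathVert_succ, hj, pathVert_succ]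
    · refine ⟨⟨i, by omega⟩, ?_⟩
      rw [pathEdge, pathVert_succ, hi, pathVert_succ, Sym2.eq_swap]

lemma subdiv_eq_extend (hn : 0 < n) (G : SimpleGraph V) :
    subdiv G u v n = extend u v n G univ := by
  ext x y
  rcases x with a | i <;> rcases y with b | j
  · rw [extend_adj_inl hn]
    simp only [subdiv, fromRel_adj, deleteEdges_adj, Set.mem_singleton_iff]
    grind [SimpleGraph.adj_comm, SimpleGraph.Adj.ne]
  all_goals
    rw [extend, fromEdgeSet_adj, Set.mem_union,
      or_iff_right (notMem_image_map_inl _ ‹Fin n› (by simp))]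
    simp only [subdiv, fromRel_adj, Set.image_univ, Set.mem_range, or_false, false_or]
    refine and_comm.trans (and_congr_left fun _ => ?_)
  · exact exists_pathEdge_eq_inl_inr.symm
  · simp_rw [Sym2.eq_swap (a := inr _)]
    exact exists_pathEdge_eq_inl_inr.symm
  · exact exists_pathEdge_eq_inr_inr.symm

lemma map_inl_mem_edgeSet_iff {T' : SimpleGraph (V ⊕ Fin n)} {e : Sym2 V} :
    e.map inl ∈ T'.edgeSet ↔ e ∈ (T'.comap inl).edgeSet := by
  induction e with | h a b => rfl

lemma comap_inl_le (hn : 0 < n) {G : SimpleGraph V} {T' : SimpleGraph (V ⊕ Fin n)}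
    (h : T' ≤ subdiv G u v n) : T'.comap inl ≤ G.deleteEdges {s(u, v)} := by
  rw [← comap_extend hn G univ, ← subdiv_eq_extend hn]
  exact fun _ _ hab => h hab

lemma extend_comap_pathSet (huv : u ≠ v) (hn : 0 < n) {G : SimpleGraph V}
    {T' : SimpleGraph (V ⊕ Fin n)} (h : T' ≤ subdiv G u v n) :
    extend u v n (T'.comap inl) (pathSet u v n T') = T' := by
  rw [← edgeSet_inj, edgeSet_extend huv]
  ext e
  constructor
  · rintro (⟨e, he, rfl⟩ | ⟨k, hk, rfl⟩)
    · exact map_inl_mem_edgeSet_iff.2 (edgeSet_mono (deleteEdges_le _) he)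
    · exact hk
  · intro he
    have hG := edgeSet_mono h he
    rw [subdiv_eq_extend hn, edgeSet_extend huv] at hG
    rcases hG with ⟨e, he', rfl⟩ | ⟨k, -, rfl⟩
    · refine Or.inl ⟨e, ?_, rfl⟩
      rw [edgeSet_deleteEdges] at he' ⊢
      exact ⟨map_inl_mem_edgeSet_iff.1 he, he'.2⟩
    · exact Or.inr ⟨k, he, rfl⟩

lemma eq_of_extend_eq (hn : 0 < n) {T₁ T₂ : SimpleGraph V} {K : Set (Fin (n + 1))}
    (h : extend u v n T₁ K = extend u v n T₂ K)
    (he : T₁.Adj u v ↔ T₂.Adj u v) : T₁ = T₂ := by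
  have h' := congr_arg (·.comap inl) h
  rw [comap_extend hn, comap_extend hn] at h'
  ext a b
  by_cases hab : s(a, b) = s(u, v)
  · rcases Sym2.eq_iff.1 hab with ⟨rfl, rfl⟩ | ⟨rfl, rfl⟩
    · exact he
    · simpa only [adj_comm] using he
  · simpa [deleteEdges_adj, hab] using congr_arg (fun H : SimpleGraph V => H.Adj a b) h'

lemma extend_sup_edge (T : SimpleGraph V) (K : Set (Fin (n + 1))) :
    extend u v n (T ⊔ edge u v) K = extend u v n T K := by
  rw [extend, extend, deleteEdges_sup, deleteEdges_edge (Set.mem_singleton _), sup_bot_eq]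

lemma ncard_sep_edgeSet_extend [Finite V] (huv : u ≠ v) (hn : 0 < n) (T : SimpleGraph V)
    (K : Set (Fin (n + 1))) (p : Sym2 (V ⊕ Fin n) → Prop) :
    {e | e ∈ (extend u v n T K).edgeSet ∧ p e}.ncard =
      {e | e ∈ (T.deleteEdges {s(u, v)}).edgeSet ∧ p (e.map inl)}.ncard +
        {k | k ∈ K ∧ p (pathEdge u v n k)}.ncard := by
  have hsplit : {e | e ∈ (extend u v n T K).edgeSet ∧ p e} =
      Sym2.map inl '' {e | e ∈ (T.deleteEdges {s(u, v)}).edgeSet ∧ p (e.map inl)} ∪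
        pathEdge u v n '' {k | k ∈ K ∧ p (pathEdge u v n k)} := by
    rw [edgeSet_extend huv]
    ext e
    simp only [Set.mem_ofPred_eq, Set.mem_union, Set.mem_image]
    grind
  have hdisj : Disjoint
      (Sym2.map inl '' {e | e ∈ (T.deleteEdges {s(u, v)}).edgeSet ∧ p (e.map inl)})
      (pathEdge u v n '' {k | k ∈ K ∧ p (pathEdge u v n k)}) := by
    rw [Set.disjoint_left]
    rintro _ ⟨e, -, rfl⟩ ⟨k, -, hk⟩
    exact pathEdge_ne_map_inl hn k e hk
  rw [hsplit, Set.ncard_union_eq hdisj,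
    Set.ncard_image_of_injective _ (Sym2.map.injective inl_injective),
    Set.ncard_image_of_injective _ (pathEdge_injective huv)]

lemma card_edgeSet_extend [Finite V] (huv : u ≠ v) (hn : 0 < n) (T : SimpleGraph V)
    (K : Set (Fin (n + 1))) :
    Nat.card (extend u v n T K).edgeSet =
      Nat.card (T.deleteEdges {s(u, v)}).edgeSet + K.ncard := by
  rw [Nat.card_coe_set_eq, Nat.card_coe_set_eq]
  simpa only [and_true, Set.ofPred_mem_eq] using ncard_sep_edgeSet_extend huv hn T K fun _ => True

lemma subdivSign_map_inl (σ : Sym2 V → ℤ) (e : Sym2 V) :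
    subdivSign (n := n) σ (e.map inl) = σ e := by
  induction e with | h a b => rfl

lemma subdivSign_pathEdge (hn : 0 < n) (σ : Sym2 V → ℤ) (k : Fin (n + 1)) :
    subdivSign σ (pathEdge u v n k) = 1 := by
  have := k.isLt
  simp only [pathEdge, pathVert]
  split_ifs <;> first | omega | rfl | simp_all

lemma posCount_extend [Finite V] (huv : u ≠ v) (hn : 0 < n) (σ : Sym2 V → ℤ)
    (T : SimpleGraph V) (K : Set (Fin (n + 1))) :
    posCount (subdivSign σ) (extend u v n T K) =
      posCount σ (T.deleteEdges {s(u, v)}) + K.ncard := by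
  simpa [posCount, subdivSign_map_inl, subdivSign_pathEdge hn] using
    ncard_sep_edgeSet_extend huv hn T K fun e => subdivSign σ e = 1

lemma extend_adj_pathVert (huv : u ≠ v) (hn : 0 < n) {T : SimpleGraph V}
    {K : Set (Fin (n + 1))} {k : Fin (n + 1)} (hk : k ∈ K) :
    (extend u v n T K).Adj (pathVert u v n k) (pathVert u v n (k + 1)) :=
  (mem_edgeSet _).1 ((pathEdge_mem_extend huv hn).2 hk)

lemma reachable_pathVert (huv : u ≠ v) (hn : 0 < n) {T : SimpleGraph V}
    {K : Set (Fin (n + 1))} {j l : ℕ} (hjl : j ≤ l) (hl : l ≤ n + 1)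
    (hK : ∀ k : Fin (n + 1), j ≤ k → (k : ℕ) < l → k ∈ K) :
    (extend u v n T K).Reachable (pathVert u v n j) (pathVert u v n l) := by
  induction l, hjl using Nat.le_induction with
  | base => rfl
  | succ l hjl ih =>
    exact (ih (by omega) fun k h1 h2 => hK k h1 (by omega)).trans
      (extend_adj_pathVert huv hn (k := ⟨l, by omega⟩) (hK _ hjl l.lt_succ_self)).reachable

lemma reachable_inl_extend (huv : u ≠ v) (hn : 0 < n) {T : SimpleGraph V}
    {K : Set (Fin (n + 1))} (hT : T.Connected) (he : T.Adj u v → K = univ) (a b : V) :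
    (extend u v n T K).Reachable (inl a) (inl b) := by
  refine (hT.preconnected a b).map_of_forall_adj inl fun x y hxy => ?_
  by_cases hxy' : s(x, y) = s(u, v)
  · have hTuv : T.Adj u v := by rw [← mem_edgeSet, ← hxy']; exact hxy
    have hpath := reachable_pathVert huv hn (T := T) (j := 0) (l := n + 1) (by omega) le_rfl
      fun k _ _ => he hTuv ▸ mem_univ k
    rw [pathVert_zero, pathVert_of_lt n.lt_succ_self] at hpath
    rcases Sym2.eq_iff.1 hxy' with ⟨rfl, rfl⟩ | ⟨rfl, rfl⟩
    · exact hpath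
    · exact hpath.symm
  · exact (extend_adj_inl hn |>.2 (by simp [deleteEdges_adj, hxy, hxy'])).reachable

lemma reachable_inr_extend (huv : u ≠ v) (hn : 0 < n) {T : SimpleGraph V}
    {K : Set (Fin (n + 1))} (hK : Kᶜ.Subsingleton) (i : Fin n) :
    (extend u v n T K).Reachable (inl u) (inr i) ∨
      (extend u v n T K).Reachable (inr i) (inl v) := by
  rw [← pathVert_succ (u := u) (v := v) i, ← pathVert_zero (v := v) (n := n),
    ← pathVert_of_lt (u := u) n.lt_succ_self]
  by_cases hlow : ∀ k : Fin (n + 1), (k : ℕ) ≤ i → k ∈ K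
  · exact Or.inl (reachable_pathVert huv hn (by omega) (by omega) fun k _ h => hlow k (by omega))
  · push Not at hlow
    obtain ⟨m, hm, hmK⟩ := hlow
    refine Or.inr (reachable_pathVert huv hn (by omega) le_rfl fun k hk _ => ?_)
    by_contra hkK
    have := hK hkK hmK
    omega

lemma connected_extend (huv : u ≠ v) (hn : 0 < n) {T : SimpleGraph V} {K : Set (Fin (n + 1))}
    (hT : T.Connected) (hK : Kᶜ.Subsingleton) (he : T.Adj u v → K = univ) :
    (extend u v n T K).Connected := by
  refine (connected_iff_exists_forall_reachable _).2 ⟨inl u, ?_⟩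
  rintro (a | i)
  · exact reachable_inl_extend huv hn hT he u a
  · rcases reachable_inr_extend huv hn hK i with h | h
    · exact h
    · exact (reachable_inl_extend huv hn hT he u v).trans h.symm

variable (u v) in
/-- Contracts the path onto `u` and `v`, cutting it at the edge `e_m`. -/
def collapse (m : ℕ) : V ⊕ Fin n → V :=
  Sum.elim id fun i => if (i : ℕ) < m then u else v

lemma collapse_pathVert {m j : ℕ} (hm : m ≤ n) (hj : j ≤ n + 1) :
    collapse u v m (pathVert u v n j) = if j ≤ m then u else v := by
  unfold pathVert
  split_ifs <;> simp [collapse] <;> omega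

lemma connected_of_connected_extend (huv : u ≠ v) {T : SimpleGraph V} {K : Set (Fin (n + 1))}
    (m : Fin (n + 1)) (hm : m ∈ K → T.Adj u v) (h : (extend u v n T K).Connected) :
    T.Connected := by
  have hpath : ∀ k ∈ K, T.Reachable (collapse u v m (pathVert u v n k))
      (collapse u v m (pathVert u v n (k + 1))) := by
    intro k hk
    rw [collapse_pathVert (by omega) (by omega), collapse_pathVert (by omega) (by omega)]
    by_cases hkm : k = m
    · subst hkm
      simpa using (hm hk).reachable
    · have : (k : ℕ) ≤ m ↔ (k : ℕ) + 1 ≤ m := by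
        have := Fin.val_ne_of_ne hkm
        omega
      simp only [this]
      rfl
  have hadj : ∀ x y, (extend u v n T K).Adj x y →
      T.Reachable (collapse u v m x) (collapse u v m y) := by
    intro x y hxy
    rw [← mem_edgeSet, edgeSet_extend huv] at hxy
    rcases hxy with ⟨e, he, hexy⟩ | ⟨k, hk, hkxy⟩
    · induction e with | h a b =>
      rw [Sym2.map_mk] at hexy
      have hab := (deleteEdges_le _ ((mem_edgeSet _).1 he)).reachable
      rcases Sym2.eq_iff.1 hexy with ⟨rfl, rfl⟩ | ⟨rfl, rfl⟩
      · exact hab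
      · exact hab.symm
    · rcases Sym2.eq_iff.1 hkxy with ⟨rfl, rfl⟩ | ⟨rfl, rfl⟩
      · exact hpath k hk
      · exact (hpath k hk).symm
  refine (connected_iff_exists_forall_reachable _).2 ⟨u, fun a => ?_⟩
  exact (h.preconnected (inl u) (inl a)).map_of_forall_adj _ hadj

lemma isTree_extend_univ_iff [Finite V] (huv : u ≠ v) (hn : 0 < n) {T : SimpleGraph V}
    (he : T.Adj u v) : (extend u v n T univ).IsTree ↔ T.IsTree := by
  have hconn : (extend u v n T univ).Connected ↔ T.Connected :=
    ⟨connected_of_connected_extend huv 0 fun _ => he,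
      fun h => connected_extend huv hn h (by simp) fun _ => rfl⟩
  have hcard := card_edgeSet_deleteEdges_add_one (e := s(u, v)) he
  rw [isTree_iff_connected_and_card, isTree_iff_connected_and_card, hconn,
    card_edgeSet_extend huv hn, Set.ncard_univ]
  simp only [Nat.card_sum, Nat.card_fin]
  exact and_congr_right fun _ => ⟨fun h => by omega, fun h => by omega⟩

lemma isTree_extend_compl_singleton_iff [Finite V] (huv : u ≠ v) (hn : 0 < n)
    {T : SimpleGraph V} (he : ¬T.Adj u v) (k : Fin (n + 1)) :
    (extend u v n T {k}ᶜ).IsTree ↔ T.IsTree := by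
  have hconn : (extend u v n T {k}ᶜ).Connected ↔ T.Connected :=
    ⟨connected_of_connected_extend huv k fun hk => absurd rfl hk,
      fun h => connected_extend huv hn h (by simp) fun h' => absurd h' he⟩
  rw [isTree_iff_connected_and_card, isTree_iff_connected_and_card, hconn,
    card_edgeSet_extend huv hn, deleteEdges_eq_self.2 (Set.disjoint_singleton_right.2 he),
    Set.ncard_compl, Set.ncard_singleton]
  simp only [Nat.card_sum, Nat.card_fin]
  exact and_congr_right fun _ => ⟨fun h => by omega, fun h => by omega⟩

lemma pathSet_eq_univ_or_compl_singleton [Finite V] (huv : u ≠ v) (hn : 0 < n)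
    {G : SimpleGraph V} {T' : SimpleGraph (V ⊕ Fin n)} (hle : T' ≤ subdiv G u v n)
    (hT' : T'.IsTree) : pathSet u v n T' = univ ∨ ∃ k, pathSet u v n T' = {k}ᶜ := by
  have : Nonempty V := ⟨u⟩
  -- `T'` has `|V| + n - 1` edges, of which at most `|V| - 1` lie in the forest `T'.comap inl`.
  have hC : (T'.comap inl).IsAcyclic := hT'.isAcyclic.of_comap Function.Embedding.inl
  have hCcard := hC.card_edgeSet_add_one_le
  have hdel : Nat.card ((T'.comap inl).deleteEdges {s(u, v)}).edgeSet ≤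
      Nat.card (T'.comap inl).edgeSet :=
    Set.ncard_le_ncard (edgeSet_mono (deleteEdges_le _))
  have hcard := (isTree_iff_connected_and_card.1 hT').2
  rw [← extend_comap_pathSet huv hn hle, card_edgeSet_extend huv hn] at hcard
  simp only [Nat.card_sum, Nat.card_fin] at hcard
  have hK : (pathSet u v n T')ᶜ.ncard ≤ 1 := by
    rw [Set.ncard_compl, Nat.card_fin]
    omega
  rcases (Set.ncard_le_one_iff_eq (Set.toFinite _)).1 hK with h | ⟨k, hk⟩
  · exact Or.inl (compl_empty_iff.1 h)
  · exact Or.inr ⟨k, by rw [← hk, compl_compl]⟩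

variable (u v n) in
def spanningTreesWithPathSet (G : SimpleGraph V) (K : Set (Fin (n + 1))) :
    Set (SimpleGraph (V ⊕ Fin n)) :=
  {T' ∈ spanningTrees (subdiv G u v n) | pathSet u v n T' = K}

lemma disjoint_spanningTreesWithPathSet {G : SimpleGraph V} {K L : Set (Fin (n + 1))}
    (h : K ≠ L) :
    Disjoint (spanningTreesWithPathSet u v n G K) (spanningTreesWithPathSet u v n G L) :=
  Set.disjoint_left.2 fun _ hK hL => h (hK.2.symm.trans hL.2)

lemma extend_mem_spanningTrees_subdiv (hn : 0 < n) {G T : SimpleGraph V}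
    {K : Set (Fin (n + 1))} (hTG : T ≤ G) (hT : (extend u v n T K).IsTree) :
    extend u v n T K ∈ spanningTrees (subdiv G u v n) :=
  ⟨subdiv_eq_extend hn G ▸ extend_mono hTG (subset_univ K), hT⟩

lemma finsum_spanningTreesWithPathSet_univ [Finite V] (huv : u ≠ v) (hn : 0 < n)
    {G : SimpleGraph V} (hG : G.Adj u v) (σ : Sym2 V → ℤ) (hσ : σ s(u, v) = 1) :
    ∑ᶠ T' ∈ spanningTreesWithPathSet u v n G univ,
        (-1 : ℤ) ^ posCount (subdivSign σ) T' =
      (-1) ^ n * ∑ᶠ T ∈ {T ∈ spanningTrees G | s(u, v) ∈ T.edgeSet},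
        (-1 : ℤ) ^ posCount σ T := by
  rw [mul_finsum_mem, eq_comm]
  refine finsum_mem_eq_of_bijOn (fun T => extend u v n T univ) ⟨?_, ?_, ?_⟩ ?_
  · rintro T ⟨⟨hTG, hT⟩, he⟩
    exact ⟨extend_mem_spanningTrees_subdiv hn hTG ((isTree_extend_univ_iff huv hn he).2 hT),
      pathSet_extend huv hn T univ⟩
  · rintro T₁ ⟨-, he₁⟩ T₂ ⟨-, he₂⟩ h
    exact eq_of_extend_eq hn h (iff_of_true he₁ he₂)
  · rintro T' ⟨⟨hle, hT'⟩, hK⟩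
    have hT'eq : extend u v n (T'.comap inl ⊔ edge u v) univ = T' := by
      rw [extend_sup_edge, ← hK, extend_comap_pathSet huv hn hle]
    have hadj : (T'.comap inl ⊔ edge u v).Adj u v := Or.inr (by simp [edge_adj, huv])
    refine ⟨T'.comap inl ⊔ edge u v, ⟨⟨?_, ?_⟩, hadj⟩, hT'eq⟩
    · exact sup_le ((comap_inl_le hn hle).trans (deleteEdges_le _))
        ((edge_le_iff G).2 (Or.inr hG))
    · rwa [← isTree_extend_univ_iff huv hn hadj, hT'eq]
  · rintro T ⟨-, he⟩
    rw [posCount_extend huv hn, Set.ncard_univ, Nat.card_fin,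
      ← posCount_deleteEdges_add_one σ he hσ]
    ring

lemma finsum_spanningTreesWithPathSet_compl_singleton [Finite V] (huv : u ≠ v) (hn : 0 < n)
    {G : SimpleGraph V} (σ : Sym2 V → ℤ) (k : Fin (n + 1)) :
    ∑ᶠ T' ∈ spanningTreesWithPathSet u v n G {k}ᶜ,
        (-1 : ℤ) ^ posCount (subdivSign σ) T' =
      (-1) ^ n * ∑ᶠ T ∈ {T ∈ spanningTrees G | s(u, v) ∉ T.edgeSet},
        (-1 : ℤ) ^ posCount σ T := by
  rw [mul_finsum_mem, eq_comm]
  refine finsum_mem_eq_of_bijOn (fun T => extend u v n T {k}ᶜ) ⟨?_, ?_, ?_⟩ ?_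
  · rintro T ⟨⟨hTG, hT⟩, he⟩
    exact ⟨extend_mem_spanningTrees_subdiv hn hTG
      ((isTree_extend_compl_singleton_iff huv hn he k).2 hT), pathSet_extend huv hn T _⟩
  · rintro T₁ ⟨-, he₁⟩ T₂ ⟨-, he₂⟩ h
    exact eq_of_extend_eq hn h (iff_of_false he₁ he₂)
  · rintro T' ⟨⟨hle, hT'⟩, hK⟩
    have hT'eq : extend u v n (T'.comap inl) {k}ᶜ = T' := by
      rw [← hK, extend_comap_pathSet huv hn hle]
    have hC := comap_inl_le hn hle
    have hnadj : ¬(T'.comap inl).Adj u v := fun h => by simpa using hC h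
    refine ⟨T'.comap inl, ⟨⟨hC.trans (deleteEdges_le _), ?_⟩, hnadj⟩, hT'eq⟩
    rwa [← isTree_extend_compl_singleton_iff huv hn hnadj k, hT'eq]
  · rintro T ⟨-, he⟩
    rw [posCount_extend huv hn, deleteEdges_eq_self.2 (Set.disjoint_singleton_right.2 he),
      Set.ncard_compl, Set.ncard_singleton, Nat.card_fin, Nat.add_sub_cancel, pow_add, mul_comm]

lemma spanningTrees_subdiv_eq_iUnion [Finite V] (huv : u ≠ v) (hn : 0 < n)
    (G : SimpleGraph V) :
    spanningTrees (subdiv G u v n) = spanningTreesWithPathSet u v n G univ ∪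
      ⋃ k, spanningTreesWithPathSet u v n G {k}ᶜ := by
  ext T'
  simp only [spanningTreesWithPathSet, Set.mem_union, Set.mem_iUnion, Set.mem_ofPred_eq]
  constructor
  · intro hT'
    rcases pathSet_eq_univ_or_compl_singleton huv hn hT'.1 hT'.2 with h | ⟨k, h⟩
    · exact Or.inl ⟨hT', h⟩
    · exact Or.inr ⟨k, hT', h⟩
  · rintro (h | ⟨k, h⟩) <;> exact h.1

end Subdiv

open Subdiv

theorem subdiv_signed_tree_sum_general {V : Type*} [Fintype V] (G : SimpleGraph V)
    (σ : Sym2 V → ℤ)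
    (u v : V) (he : G.Adj u v) (hsign : σ s(u, v) = 1)
    (n : ℕ) (hn : 1 ≤ n) :
    ∑ᶠ T' ∈ spanningTrees (subdiv G u v n),
        (-1 : ℤ) ^ posCount (subdivSign σ) T' =
      (-1 : ℤ) ^ n *
        ((∑ᶠ T ∈ {T ∈ spanningTrees G | s(u, v) ∈ T.edgeSet},
            (-1 : ℤ) ^ posCount σ T) +
          ((n : ℤ) + 1) *
            ∑ᶠ T ∈ {T ∈ spanningTrees G | s(u, v) ∉ T.edgeSet},
              (-1 : ℤ) ^ posCount σ T) := by
  have huv := he.ne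
  have hdisj : Disjoint (spanningTreesWithPathSet u v n G Set.univ)
      (⋃ k, spanningTreesWithPathSet u v n G {k}ᶜ) :=
    Set.disjoint_iUnion_right.2 fun k => disjoint_spanningTreesWithPathSet
      fun h => Set.singleton_ne_empty k (Set.compl_univ_iff.1 h.symm)
  have hpair : Pairwise (Function.onFun Disjoint fun k : Fin (n + 1) =>
      spanningTreesWithPathSet u v n G {k}ᶜ) := fun k l hkl =>
    disjoint_spanningTreesWithPathSet (compl_injective.ne (Set.singleton_injective.ne hkl))
  have hconst : ∀ c : ℤ, ∑ᶠ _ : Fin (n + 1), c = (n + 1) * c := fun c => by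
    rw [finsum_eq_sum_of_fintype, Finset.sum_const, Finset.card_univ, Fintype.card_fin,
      nsmul_eq_mul, Nat.cast_succ]
  rw [spanningTrees_subdiv_eq_iUnion huv hn,
    finsum_mem_union hdisj (Set.toFinite _) (Set.toFinite _),
    finsum_mem_iUnion hpair fun _ => Set.toFinite _,
    finsum_spanningTreesWithPathSet_univ huv hn he σ hsign,
    finsum_congr fun k => finsum_spanningTreesWithPathSet_compl_singleton huv hn σ k, hconst]
  ring

/-- The sum over all spanning trees `T'` of `G^n` of `(-1)^{v(T')}` equals
`(-1)^n * (x + (n+1) * y)`, where `x` is the sum of `(-1)^{v(T)}` over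
spanning trees `T` of `G` containing `e`, and `y` is the corresponding sum
over spanning trees of `G` not containing `e`. -/
theorem subdiv_signed_tree_sum {V : Type*} [Fintype V] (G : SimpleGraph V)
    (hG : G.Connected) (σ : Sym2 V → ℤ)
    (hσ : ∀ ed ∈ G.edgeSet, σ ed = 1 ∨ σ ed = -1)
    (u v : V) (he : G.Adj u v) (hsign : σ s(u, v) = 1)
    (n : ℕ) (hn : 1 ≤ n) :
    ∑ᶠ T' ∈ spanningTrees (subdiv G u v n),
        (-1 : ℤ) ^ posCount (subdivSign σ) T' =
      (-1 : ℤ) ^ n *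
        ((∑ᶠ T ∈ {T ∈ spanningTrees G | s(u, v) ∈ T.edgeSet},
            (-1 : ℤ) ^ posCount σ T) +
          ((n : ℤ) + 1) *
            ∑ᶠ T ∈ {T ∈ spanningTrees G | s(u, v) ∉ T.edgeSet},
              (-1 : ℤ) ^ posCount σ T) :=
  subdiv_signed_tree_sum_general G σ u v he hsign n hn
end

section
/- Let x be the sum of (−1)^{v(T)} over spanning trees T of G containing e, and let y be the sum of (−1)^{v(T)} over spanning trees T of G not containing e. If |x + y| = |x| + |y|, then the absolute value of the sum of (−1)^{v(T')} over all spanning trees T' of G^n equals |x| + (n+1)·|y|. -/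
open Sum

/-! Off the new path, a spanning tree of `G^n` is a forest of `G - uv`. If it contains the whole
path, putting `uv` back yields a spanning tree of `G` through `uv`; otherwise, being connected, it
misses exactly one of the `n + 1` path edges, and what is left is a spanning tree of `G` avoiding
`uv`. Conversely a spanning tree through `uv` gives one spanning tree of `G^n` (replace `uv` by the
path) and a spanning tree avoiding `uv` gives `n + 1` of them (add the path minus one edge). Either
way exactly `n` positive edges are gained, so the signed count for `G^n` is
`(-1)^n (x + (n + 1) y)`, and `|x + y| = |x| + |y|` says that `x` and `y` have the same sign. -/

lemma abs_add_mul_eq_of_abs_add_eq {R : Type*} [Ring R] [LinearOrder R] [IsStrictOrderedRing R]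
    {x y c : R} (hc : 0 ≤ c) (h : |x + y| = |x| + |y|) : |x + c * y| = |x| + c * |y| := by
  rcases (abs_add_eq_add_abs_iff x y).1 h with ⟨hx, hy⟩ | ⟨hx, hy⟩
  · rw [abs_of_nonneg hx, abs_of_nonneg hy, abs_of_nonneg (add_nonneg hx (mul_nonneg hc hy))]
  · rw [abs_of_nonpos hx, abs_of_nonpos hy,
      abs_of_nonpos (add_nonpos hx (mul_nonpos_of_nonneg_of_nonpos hc hy)), neg_add, mul_neg]

namespace SimpleGraph

variable {X Y : Type*} {G : SimpleGraph X} {H : SimpleGraph Y}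

theorem edgeSet_comap (f : X → Y) (H : SimpleGraph Y) :
    (H.comap f).edgeSet = Sym2.map f ⁻¹' H.edgeSet := by
  ext ed
  induction ed using Sym2.ind
  rfl

theorem Reachable.map_of_forall_adj_s4 (f : X → Y)
    (hf : ∀ a b, G.Adj a b → H.Reachable (f a) (f b)) {a b : X} (h : G.Reachable a b) :
    H.Reachable (f a) (f b) := by
  rw [reachable_iff_reflTransGen] at h
  exact (reachable_iff_reflTransGen _ _).2 <|
    Relation.ReflTransGen.lift' f (fun c d hcd => (reachable_iff_reflTransGen _ _).1 (hf c d hcd))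
      _ _ h

theorem Reachable.map_of_forall_edge (f : X → Y)
    (hf : ∀ ed ∈ G.edgeSet, Sym2.map f ed ∈ H.edgeSet ∨ (Sym2.map f ed).IsDiag) {a b : X}
    (h : G.Reachable a b) : H.Reachable (f a) (f b) := by
  refine h.map_of_forall_adj_s4 f fun c d hcd => ?_
  rcases hf s(c, d) hcd with h | h
  · exact Adj.reachable h
  · rw [Sym2.map_mk, Sym2.mk_isDiag_iff] at h
    exact h ▸ .rfl

theorem Connected.of_map_of_forall_edge (hG : G.Connected) {f : X → Y}
    (hsurj : Function.Surjective f)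
    (hf : ∀ ed ∈ G.edgeSet, Sym2.map f ed ∈ H.edgeSet ∨ (Sym2.map f ed).IsDiag) :
    H.Connected := by
  refine (connected_iff _).2 ⟨fun a b => ?_, hG.nonempty.map f⟩
  obtain ⟨a, rfl⟩ := hsurj a
  obtain ⟨b, rfl⟩ := hsurj b
  exact (hG.preconnected a b).map_of_forall_edge f hf

end SimpleGraph

section PathVertices

variable {V : Type*} {u v : V} {n m : ℕ}

/-- The `m`-th vertex of the path `u = w₀, w₁, …, wₙ, wₙ₊₁ = v` replacing `uv` in `G^n`, where
`wᵢ = inr (i - 1)` for `1 ≤ i ≤ n`; indices beyond `n + 1` also give `v`. -/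
def pathVert (u v : V) (n : ℕ) : ℕ → V ⊕ Fin n
  | 0 => inl u
  | m + 1 => if h : m < n then inr ⟨m, h⟩ else inl v

def pathEdge (u v : V) (n m : ℕ) : Sym2 (V ⊕ Fin n) :=
  s(pathVert u v n m, pathVert u v n (m + 1))

@[simp] lemma pathVert_zero : pathVert u v n 0 = inl u := rfl

lemma pathVert_succ_of_lt (h : m < n) : pathVert u v n (m + 1) = inr ⟨m, h⟩ := dif_pos h

lemma pathVert_of_lt (h : n < m) : pathVert u v n m = inl v := by
  obtain ⟨m, rfl⟩ := Nat.exists_eq_add_one_of_ne_zero (show m ≠ 0 by omega)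
  exact dif_neg (by omega)

@[simp] lemma pathVert_val_succ (i : Fin n) : pathVert u v n (i + 1) = inr i :=
  pathVert_succ_of_lt i.isLt

lemma pathEdge_zero (hn : 1 ≤ n) : pathEdge u v n 0 = s(inl u, inr ⟨0, hn⟩) := by
  rw [pathEdge, pathVert_zero, pathVert_succ_of_lt hn]

lemma pathEdge_succ_of_lt (h : m + 1 < n) :
    pathEdge u v n (m + 1) = s(inr ⟨m, by omega⟩, inr ⟨m + 1, h⟩) := by
  rw [pathEdge, pathVert_succ_of_lt, pathVert_succ_of_lt]

lemma pathEdge_self (hn : 1 ≤ n) : pathEdge u v n n = s(inr ⟨n - 1, by omega⟩, inl v) := by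
  obtain ⟨k, rfl⟩ := Nat.exists_eq_add_one_of_ne_zero (show n ≠ 0 by omega)
  rw [pathEdge, pathVert_succ_of_lt (by omega), pathVert_of_lt (by omega)]
  rfl

lemma pathVert_injOn (huv : u ≠ v) : Set.InjOn (pathVert u v n) (Set.Iic (n + 1)) := by
  classical
  let index : V ⊕ Fin n → ℕ := Sum.elim (fun w => if w = u then 0 else n + 1) (· + 1)
  have hindex : ∀ m ≤ n + 1, index (pathVert u v n m) = m := by
    rintro (_ | m) hm
    · simp [index]
    · rcases lt_or_ge m n with h | h
      · simp [index, pathVert_succ_of_lt h]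
      · simp [index, pathVert_of_lt (show n < m + 1 by omega), huv.symm]; omega
  intro m hm m' hm' h
  rw [← hindex m hm, ← hindex m' hm', h]

lemma pathEdge_injOn (huv : u ≠ v) : Set.InjOn (pathEdge u v n) (Set.Iic n) := by
  intro m hm m' hm' h
  have hinj := pathVert_injOn (n := n) huv
  simp only [Set.mem_Iic] at hm hm'
  rcases Sym2.eq_iff.1 h with ⟨h, -⟩ | ⟨h, h'⟩
  · exact hinj (by simp; omega) (by simp; omega) h
  · have := hinj (by simp; omega) (by simp; omega) h
    have := hinj (by simp; omega) (by simp; omega) h'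
    omega

lemma pathEdge_not_isDiag (huv : u ≠ v) (hm : m ≤ n) : ¬ (pathEdge u v n m).IsDiag := by
  rw [pathEdge, Sym2.mk_isDiag_iff]
  intro h
  have := pathVert_injOn huv (by simp; omega) (by simp; omega) h
  omega

lemma exists_inr_mem_pathEdge (hn : 1 ≤ n) (hm : m ≤ n) :
    ∃ i, inr i ∈ pathEdge u v n m := by
  rcases m with _ | m
  · exact ⟨⟨0, hn⟩, by rw [pathEdge, pathVert_succ_of_lt hn]; exact Sym2.mem_mk_right _ _⟩
  · exact ⟨⟨m, hm⟩, by rw [pathEdge, pathVert_succ_of_lt hm]; exact Sym2.mem_mk_left _ _⟩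

lemma map_inl_ne_pathEdge (hn : 1 ≤ n) (hm : m ≤ n) (ed : Sym2 V) :
    Sym2.map inl ed ≠ pathEdge u v n m := by
  intro h
  obtain ⟨i, hi⟩ := exists_inr_mem_pathEdge (u := u) (v := v) hn hm
  rw [← h, Sym2.mem_map] at hi
  obtain ⟨_, -, hi⟩ := hi
  exact inl_ne_inr hi

end PathVertices

section SubdivLift

variable {V : Type*} {u v : V} {n m : ℕ}

def subdivLift (T : SimpleGraph V) (u v : V) (n : ℕ) (S : Set ℕ) : SimpleGraph (V ⊕ Fin n) :=
  SimpleGraph.fromEdgeSet (Sym2.map inl '' (T.edgeSet \ {s(u, v)}) ∪ pathEdge u v n '' S)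

variable {T : SimpleGraph V} {S : Set ℕ}

lemma edgeSet_subdivLift (huv : u ≠ v) (hS : S ⊆ Set.Iic n) :
    (subdivLift T u v n S).edgeSet =
      Sym2.map inl '' (T.edgeSet \ {s(u, v)}) ∪ pathEdge u v n '' S := by
  rw [subdivLift, SimpleGraph.edgeSet_fromEdgeSet, sdiff_eq_left, Set.disjoint_left]
  rintro _ (⟨ed, hed, rfl⟩ | ⟨m, hm, rfl⟩)
  · exact (Sym2.isDiag_map inl_injective).not.2 (T.not_isDiag_of_mem_edgeSet hed.1)
  · exact pathEdge_not_isDiag huv (hS hm)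

lemma edgeSet_subdiv_subset (G : SimpleGraph V) (hn : 1 ≤ n) :
    (subdiv G u v n).edgeSet ⊆
      Sym2.map inl '' (G.edgeSet \ {s(u, v)}) ∪ pathEdge u v n '' Set.Iic n := by
  suffices h : ∀ a b, (subdiv G u v n).Adj a b → s(a, b) ∈
      Sym2.map inl '' (G.edgeSet \ {s(u, v)}) ∪ pathEdge u v n '' Set.Iic n by
    rintro ⟨a, b⟩ hab
    exact h a b hab
  have hpath : ∀ m ≤ n, ∀ ed, pathEdge u v n m = ed →
      ed ∈ Sym2.map inl '' (G.edgeSet \ {s(u, v)}) ∪ pathEdge u v n '' Set.Iic n :=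
    fun m hm _ h => Or.inr ⟨m, hm, h⟩
  rintro (a | i) (b | j) hab <;>
    simp only [subdiv, SimpleGraph.fromRel_adj, ne_eq, or_false, false_or] at hab
  · obtain ⟨hab, hne⟩ | ⟨hba, hne⟩ := hab.2
    · exact Or.inl ⟨s(a, b), ⟨hab, hne⟩, rfl⟩
    · exact Or.inl ⟨s(b, a), ⟨hba, hne⟩, Sym2.eq_swap⟩
  · obtain ⟨rfl, hj⟩ | ⟨rfl, hj⟩ := hab.2
    · exact hpath 0 (Nat.zero_le n) _ (by simp [pathEdge_zero hn, Fin.ext_iff, hj])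
    · exact hpath n le_rfl _ (by simp [pathEdge_self hn, Fin.ext_iff, hj])
  · obtain ⟨rfl, hi⟩ | ⟨rfl, hi⟩ := hab.2
    · exact hpath 0 (Nat.zero_le n) _ (by simp [pathEdge_zero hn, Fin.ext_iff, hi])
    · exact hpath n le_rfl _ (by simp [pathEdge_self hn, Fin.ext_iff, hi])
  · obtain hj | hi := hab.2
    · exact hpath (i + 1) (by omega) _
        (by simp [pathEdge_succ_of_lt (hj ▸ j.isLt), Fin.ext_iff, hj])
    · exact hpath (j + 1) (by omega) _
        (by simp [pathEdge_succ_of_lt (hi ▸ i.isLt), Fin.ext_iff, hi])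

lemma pathEdge_mem_edgeSet_subdiv (G : SimpleGraph V) (hn : 1 ≤ n) (hm : m ≤ n) :
    pathEdge u v n m ∈ (subdiv G u v n).edgeSet := by
  rcases m with _ | k
  · rw [pathEdge_zero hn, SimpleGraph.mem_edgeSet, subdiv, SimpleGraph.fromRel_adj]
    simp
  · rcases hm.lt_or_eq with h | h
    · rw [pathEdge_succ_of_lt h, SimpleGraph.mem_edgeSet, subdiv, SimpleGraph.fromRel_adj]
      simp
    · rw [h, pathEdge_self hn, SimpleGraph.mem_edgeSet, subdiv, SimpleGraph.fromRel_adj]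
      simp

lemma subdiv_eq_subdivLift (G : SimpleGraph V) (hn : 1 ≤ n) (huv : u ≠ v) :
    subdiv G u v n = subdivLift G u v n (Set.Iic n) := by
  refine le_antisymm ((SimpleGraph.le_fromEdgeSet_iff _ _).2 (edgeSet_subdiv_subset G hn)) ?_
  rw [← SimpleGraph.edgeSet_subset_edgeSet, edgeSet_subdivLift huv le_rfl]
  rintro _ (⟨ed, ⟨hed, hne⟩, rfl⟩ | ⟨m, hm, rfl⟩)
  · induction ed using Sym2.ind with
    | _ a b =>
      simp only [Sym2.map_mk, SimpleGraph.mem_edgeSet, subdiv, SimpleGraph.fromRel_adj]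
      exact ⟨by simpa using hed.ne, Or.inl ⟨hed, hne⟩⟩
  · exact pathEdge_mem_edgeSet_subdiv G hn hm

lemma preimage_map_inl_edgeSet_subdivLift (hn : 1 ≤ n) (huv : u ≠ v) (hS : S ⊆ Set.Iic n) :
    Sym2.map inl ⁻¹' (subdivLift T u v n S).edgeSet = T.edgeSet \ {s(u, v)} := by
  rw [edgeSet_subdivLift huv hS, Set.preimage_union,
    Set.preimage_image_eq _ (Sym2.map.injective inl_injective), Set.union_eq_left]
  rintro ed ⟨m, hm, h⟩
  exact absurd h.symm (map_inl_ne_pathEdge hn (hS hm) ed)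

lemma pathEdge_mem_edgeSet_subdivLift (hn : 1 ≤ n) (huv : u ≠ v) (hS : S ⊆ Set.Iic n)
    (hm : m ≤ n) : pathEdge u v n m ∈ (subdivLift T u v n S).edgeSet ↔ m ∈ S := by
  rw [edgeSet_subdivLift huv hS, Set.mem_union,
    (pathEdge_injOn huv).mem_image_iff hS (Set.mem_Iic.2 hm), or_iff_right]
  rintro ⟨ed, -, h⟩
  exact map_inl_ne_pathEdge hn hm ed h

lemma subdivLift_le_subdiv {G : SimpleGraph V} (hn : 1 ≤ n) (huv : u ≠ v) (hT : T ≤ G)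
    (hS : S ⊆ Set.Iic n) : subdivLift T u v n S ≤ subdiv G u v n := by
  rw [subdiv_eq_subdivLift G hn huv]
  exact SimpleGraph.fromEdgeSet_mono <| Set.union_subset_union
    (Set.image_mono (Set.sdiff_subset_sdiff_left (SimpleGraph.edgeSet_mono hT)))
    (Set.image_mono hS)

lemma subdivLift_injective (hn : 1 ≤ n) (huv : u ≠ v) (hS : S ⊆ Set.Iic n)
    {T₁ T₂ : SimpleGraph V} (h : subdivLift T₁ u v n S = subdivLift T₂ u v n S)
    (he : s(u, v) ∈ T₁.edgeSet ↔ s(u, v) ∈ T₂.edgeSet) : T₁ = T₂ := by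
  have hdiff := congrArg (fun T' => Sym2.map inl ⁻¹' T'.edgeSet) h
  simp only [preimage_map_inl_edgeSet_subdivLift hn huv hS] at hdiff
  rw [← SimpleGraph.edgeSet_inj]
  ext ed
  by_cases hed : ed = s(u, v)
  · rw [hed, he]
  · simpa [hed] using congrArg (ed ∈ ·) hdiff

lemma subdivLift_sup_edge (T : SimpleGraph V) (S : Set ℕ) :
    subdivLift (T ⊔ SimpleGraph.edge u v) u v n S = subdivLift T u v n S := by
  simp [subdivLift, SimpleGraph.edgeSet_sup, Set.union_sdiff_distrib]

lemma edgeSet_comap_inl_subset {G : SimpleGraph V} {T' : SimpleGraph (V ⊕ Fin n)} (hn : 1 ≤ n)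
    (huv : u ≠ v) (h : T' ≤ subdiv G u v n) :
    (T'.comap inl).edgeSet ⊆ G.edgeSet \ {s(u, v)} := by
  rw [SimpleGraph.edgeSet_comap, ← preimage_map_inl_edgeSet_subdivLift hn huv le_rfl,
    ← subdiv_eq_subdivLift G hn huv]
  exact Set.preimage_mono (SimpleGraph.edgeSet_mono h)

lemma eq_subdivLift_comap_inl {G : SimpleGraph V} {T' : SimpleGraph (V ⊕ Fin n)} (hn : 1 ≤ n)
    (huv : u ≠ v) (h : T' ≤ subdiv G u v n) :
    T' = subdivLift (T'.comap inl) u v n {m | m ≤ n ∧ pathEdge u v n m ∈ T'.edgeSet} := by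
  rw [← SimpleGraph.edgeSet_inj, edgeSet_subdivLift huv fun m hm => hm.1]
  apply subset_antisymm
  · intro ed hed
    have hed' := SimpleGraph.edgeSet_mono h hed
    rw [subdiv_eq_subdivLift G hn huv, edgeSet_subdivLift huv le_rfl] at hed'
    rcases hed' with ⟨ed₀, hed₀, rfl⟩ | ⟨m, hm, rfl⟩
    · exact Or.inl ⟨ed₀, ⟨by rwa [SimpleGraph.edgeSet_comap], hed₀.2⟩, rfl⟩
    · exact Or.inr ⟨m, ⟨hm, hed⟩, rfl⟩
  · rintro _ (⟨ed₀, ⟨hed₀, -⟩, rfl⟩ | ⟨m, ⟨-, hm⟩, rfl⟩)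
    · rwa [SimpleGraph.edgeSet_comap] at hed₀
    · exact hm

lemma ncard_sep_edgeSet_subdivLift [Finite V] (hn : 1 ≤ n) (huv : u ≠ v) (hS : S ⊆ Set.Iic n)
    (P : Sym2 (V ⊕ Fin n) → Prop) (hP : ∀ m ∈ S, P (pathEdge u v n m)) :
    {ed ∈ (subdivLift T u v n S).edgeSet | P ed}.ncard =
      ({ed ∈ T.edgeSet | P (Sym2.map inl ed)} \ {s(u, v)}).ncard + S.ncard := by
  have hsplit : {ed ∈ (subdivLift T u v n S).edgeSet | P ed} =
      Sym2.map inl '' ({ed ∈ T.edgeSet | P (Sym2.map inl ed)} \ {s(u, v)}) ∪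
        pathEdge u v n '' S := by
    rw [edgeSet_subdivLift huv hS]
    ext ed
    constructor
    · rintro ⟨⟨ed, ⟨hed, hne⟩, rfl⟩ | ⟨m, hm, rfl⟩, hP⟩
      · exact Or.inl ⟨ed, ⟨⟨hed, hP⟩, hne⟩, rfl⟩
      · exact Or.inr ⟨m, hm, rfl⟩
    · rintro (⟨ed, ⟨⟨hed, hP⟩, hne⟩, rfl⟩ | ⟨m, hm, rfl⟩)
      · exact ⟨Or.inl ⟨ed, ⟨hed, hne⟩, rfl⟩, hP⟩
      · exact ⟨Or.inr ⟨m, hm, rfl⟩, hP m hm⟩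
  have hdisj : Disjoint (Sym2.map inl '' ({ed ∈ T.edgeSet | P (Sym2.map inl ed)} \ {s(u, v)}))
      (pathEdge u v n '' S) := by
    rw [Set.disjoint_left]
    rintro _ ⟨ed, -, rfl⟩ ⟨m, hm, h⟩
    exact map_inl_ne_pathEdge hn (hS hm) ed h.symm
  rw [hsplit, Set.ncard_union_eq hdisj (Set.toFinite _) (Set.toFinite _),
    Set.ncard_image_of_injective _ (Sym2.map.injective inl_injective),
    ((pathEdge_injOn huv).mono hS).ncard_image]

/-- As `k` ranges over `0, …, n`, these are the sets of path edges that complete `T` minus `uv`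
to a spanning tree of `G^n` when `T` is a spanning tree of `G`. -/
def IsLiftIndexSet (T : SimpleGraph V) (u v : V) (n k : ℕ) (S : Set ℕ) : Prop :=
  s(u, v) ∈ T.edgeSet ∧ S = Set.Iic n ∨ s(u, v) ∉ T.edgeSet ∧ S = Set.Iic n \ {k}

lemma IsLiftIndexSet.subset_Iic {k : ℕ} (hS : IsLiftIndexSet T u v n k S) : S ⊆ Set.Iic n := by
  rcases hS with ⟨-, rfl⟩ | ⟨-, rfl⟩ <;> simp

lemma IsLiftIndexSet.ncard_sep_edgeSet [Finite V] (hn : 1 ≤ n) (huv : u ≠ v) {k : ℕ}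
    (hk : k ≤ n) (hS : IsLiftIndexSet T u v n k S)
    (P : Sym2 (V ⊕ Fin n) → Prop) (hP : ∀ m ≤ n, P (pathEdge u v n m))
    (he : P (Sym2.map inl s(u, v))) :
    {ed ∈ (subdivLift T u v n S).edgeSet | P ed}.ncard =
      {ed ∈ T.edgeSet | P (Sym2.map inl ed)}.ncard + n := by
  rw [ncard_sep_edgeSet_subdivLift hn huv hS.subset_Iic P fun m hm => hP m (hS.subset_Iic hm)]
  rcases hS with ⟨heT, rfl⟩ | ⟨heT, rfl⟩
  · have heP : s(u, v) ∈ {ed ∈ T.edgeSet | P (Sym2.map inl ed)} := ⟨heT, he⟩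
    rw [Set.ncard_Iic_nat, ← Set.ncard_sdiff_singleton_add_one heP (Set.toFinite _)]
    ring
  · rw [Set.sdiff_singleton_eq_self fun h => heT h.1,
      Set.ncard_sdiff_singleton_of_mem (Set.mem_Iic.2 hk), Set.ncard_Iic_nat, Nat.add_sub_cancel]

lemma ncard_edgeSet_subdivLift [Finite V] (hn : 1 ≤ n) (huv : u ≠ v) {k : ℕ} (hk : k ≤ n)
    (hS : IsLiftIndexSet T u v n k S) :
    (subdivLift T u v n S).edgeSet.ncard = T.edgeSet.ncard + n := by
  simpa using hS.ncard_sep_edgeSet hn huv hk (fun _ => True) (fun _ _ => trivial) trivial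

lemma subdivSign_map_inl (σ : Sym2 V → ℤ) (ed : Sym2 V) :
    subdivSign (n := n) σ (Sym2.map inl ed) = σ ed := by
  induction ed using Sym2.ind
  rfl

lemma subdivSign_of_inr_mem (σ : Sym2 V → ℤ) {ed : Sym2 (V ⊕ Fin n)} {i : Fin n}
    (h : inr i ∈ ed) : subdivSign σ ed = 1 := by
  induction ed using Sym2.ind with
  | _ a b =>
    rcases Sym2.mem_iff.1 h with rfl | rfl
    · cases b <;> rfl
    · cases a <;> rfl

lemma posCount_subdivLift [Finite V] (hn : 1 ≤ n) (huv : u ≠ v) {k : ℕ} (hk : k ≤ n)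
    (hS : IsLiftIndexSet T u v n k S)
    {σ : Sym2 V → ℤ} (hσ : σ s(u, v) = 1) :
    posCount (subdivSign σ) (subdivLift T u v n S) = posCount σ T + n := by
  have hpath : ∀ m ≤ n, subdivSign σ (pathEdge u v n m) = 1 := fun m hm =>
    (exists_inr_mem_pathEdge hn hm).elim fun _ hi => subdivSign_of_inr_mem σ hi
  simpa only [posCount, subdivSign_map_inl] using
    hS.ncard_sep_edgeSet hn huv hk (subdivSign σ · = 1) hpath (by rwa [subdivSign_map_inl])

end SubdivLift

section Connectivity

variable {V : Type*} {u v : V} {n : ℕ} {T : SimpleGraph V} {S : Set ℕ}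

lemma adj_pathVert_subdivLift (huv : u ≠ v) {m : ℕ} (hm : m ≤ n) (hmS : m ∈ S) :
    (subdivLift T u v n S).Adj (pathVert u v n m) (pathVert u v n (m + 1)) :=
  (SimpleGraph.fromEdgeSet_adj _).2
    ⟨Or.inr ⟨m, hmS, rfl⟩, fun h => pathEdge_not_isDiag huv hm (Sym2.mk_isDiag_iff.2 h)⟩

lemma reachable_pathVert_of_forall_lt (huv : u ≠ v) {m : ℕ} (hm : m ≤ n + 1)
    (hS : ∀ j < m, j ∈ S) : (subdivLift T u v n S).Reachable (inl u) (pathVert u v n m) := by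
  induction m with
  | zero => rfl
  | succ m ih =>
    exact (ih (by omega) fun j hj => hS j (by omega)).trans
      (adj_pathVert_subdivLift huv (by omega) (hS m (by omega))).reachable

lemma reachable_pathVert_of_forall_ge (huv : u ≠ v) {m : ℕ}
    (hS : ∀ j, m ≤ j → j ≤ n → j ∈ S) :
    (subdivLift T u v n S).Reachable (pathVert u v n m) (inl v) := by
  induction h : n + 1 - m generalizing m with
  | zero => rw [pathVert_of_lt (by omega)]
  | succ d ih =>
    exact (adj_pathVert_subdivLift huv (by omega) (hS m le_rfl (by omega))).reachable.trans
      (ih (fun j hj => hS j (by omega)) (by omega))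

lemma connected_subdivLift (huv : u ≠ v) (hT : T.Connected) {k : ℕ}
    (hS : Set.Iic n \ {k} ⊆ S) (he : s(u, v) ∈ T.edgeSet → k ∈ S) :
    (subdivLift T u v n S).Connected := by
  have hmem : ∀ j ≤ n, j ≠ k → j ∈ S := fun j hj hjk => hS ⟨hj, hjk⟩
  have hinl : ∀ a, (subdivLift T u v n S).Reachable (inl u) (inl a) := by
    intro a
    refine (hT.preconnected u a).map_of_forall_adj_s4 inl fun a b hab => ?_
    by_cases he' : s(a, b) = s(u, v)
    · have hkS := he (he' ▸ hab)
      have huv' : (subdivLift T u v n S).Reachable (inl u) (inl v) := by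
        simpa [pathVert_of_lt] using reachable_pathVert_of_forall_lt huv (m := n + 1) le_rfl
          fun j hj => (eq_or_ne j k).elim (· ▸ hkS) (hmem j (by omega))
      rcases Sym2.eq_iff.1 he' with ⟨rfl, rfl⟩ | ⟨rfl, rfl⟩
      · exact huv'
      · exact huv'.symm
    · exact SimpleGraph.Adj.reachable <| (SimpleGraph.fromEdgeSet_adj _).2
        ⟨Or.inl ⟨s(a, b), ⟨hab, he'⟩, rfl⟩, by simpa using hab.ne⟩
  have hall : ∀ w, (subdivLift T u v n S).Reachable (inl u) w := by
    rintro (a | i)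
    · exact hinl a
    · rw [← pathVert_val_succ (u := u) (v := v) i]
      by_cases hik : (i : ℕ) + 1 ≤ k
      · exact reachable_pathVert_of_forall_lt huv (by omega)
          fun j hj => hmem j (by omega) (by omega)
      · exact (hinl v).trans
          (reachable_pathVert_of_forall_ge huv fun j hj hjn => hmem j hjn (by omega)).symm
  exact (SimpleGraph.connected_iff _).2
    ⟨fun w₁ w₂ => (hall w₁).symm.trans (hall w₂), ⟨inl u⟩⟩

lemma connected_of_connected_subdivLift (huv : u ≠ v) (hSn : S ⊆ Set.Iic n)
    (h : (subdivLift T u v n S).Connected) {k : ℕ} (hk : k ≤ n)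
    (he : k ∈ S → s(u, v) ∈ T.edgeSet) : T.Connected := by
  -- only the `k`-th path edge is mapped onto `uv`, the others collapse to a vertex
  let collapse : V ⊕ Fin n → V := Sum.elim id fun i => if (i : ℕ) < k then u else v
  have hcollapse : ∀ m, collapse (pathVert u v n m) = if m ≤ k then u else v := by
    rintro (_ | m)
    · simp [collapse]
    · rcases lt_or_ge m n with hm | hm
      · simp [collapse, pathVert_succ_of_lt hm]
      · simp [collapse, pathVert_of_lt (show n < m + 1 by omega), show ¬ m + 1 ≤ k by omega]
  refine h.of_map_of_forall_edge (f := collapse) (fun a => ⟨inl a, rfl⟩) ?_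
  rw [edgeSet_subdivLift huv hSn]
  rintro _ (⟨ed, hed, rfl⟩ | ⟨m, hm, rfl⟩)
  · left
    rw [Sym2.map_map, show collapse ∘ inl = id from rfl, Sym2.map_id]
    exact hed.1
  · rw [pathEdge, Sym2.map_mk, hcollapse, hcollapse]
    by_cases hmk : m = k
    · subst hmk
      simpa using Or.inl (he hm)
    · right
      rw [Sym2.mk_isDiag_iff]
      split_ifs <;> first | rfl | omega

lemma mem_or_mem_of_connected_subdivLift (huv : u ≠ v) (hSn : S ⊆ Set.Iic n)
    (h : (subdivLift T u v n S).Connected) {j k : ℕ} (hjk : j < k) (hk : k ≤ n) :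
    j ∈ S ∨ k ∈ S := by
  by_contra! hjkS
  -- the path vertices strictly between the two missing edges would be cut off from `inl u`
  let between : V ⊕ Fin n → Prop := Sum.elim (fun _ => False) fun i => j < i + 1 ∧ i + 1 ≤ k
  have hbetween : ∀ m, between (pathVert u v n m) ↔ j < m ∧ m ≤ k := by
    rintro (_ | m)
    · simp [between]
    · rcases lt_or_ge m n with hm | hm
      · simp [between, pathVert_succ_of_lt hm]
      · simp [between, pathVert_of_lt (show n < m + 1 by omega)]
        omega
  have hreach := (h.preconnected (inl u) (pathVert u v n k)).map_of_forall_edge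
    (H := ⊥) between ?_
  · rw [SimpleGraph.reachable_bot] at hreach
    have hk_between := (hbetween k).2 ⟨hjk, le_rfl⟩
    rwa [← hreach] at hk_between
  rw [edgeSet_subdivLift huv hSn]
  rintro _ (⟨ed, -, rfl⟩ | ⟨m, hm, rfl⟩) <;> right
  · induction ed using Sym2.ind
    simp [between]
  · rw [pathEdge, Sym2.map_mk, Sym2.mk_isDiag_iff, eq_iff_iff, hbetween, hbetween]
    have : m ≠ j := fun h => hjkS.1 (h ▸ hm)
    have : m ≠ k := fun h => hjkS.2 (h ▸ hm)
    omega

end Connectivity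

section SpanningTrees

variable {V : Type*} [Finite V] {u v : V} {n : ℕ} {G : SimpleGraph V}

lemma isTree_subdivLift_iff {T : SimpleGraph V} {S : Set ℕ} (hn : 1 ≤ n) (huv : u ≠ v)
    {k : ℕ} (hk : k ≤ n) (hS : IsLiftIndexSet T u v n k S) :
    (subdivLift T u v n S).IsTree ↔ T.IsTree := by
  have hconn : (subdivLift T u v n S).Connected ↔ T.Connected := by
    refine ⟨fun h => connected_of_connected_subdivLift huv hS.subset_Iic h hk ?_,
      fun h => connected_subdivLift (k := k) huv h ?_ ?_⟩ <;>
    rcases hS with ⟨he, rfl⟩ | ⟨he, rfl⟩ <;> simp_all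
  rw [SimpleGraph.isTree_iff_connected_and_card, SimpleGraph.isTree_iff_connected_and_card, hconn,
    Nat.card_coe_set_eq, Nat.card_coe_set_eq, ncard_edgeSet_subdivLift hn huv hk hS, Nat.card_sum,
    Nat.card_eq_fintype_card (α := Fin n), Fintype.card_fin]
  exact and_congr_right fun _ => by omega

lemma subdivLift_mem_spanningTrees {T : SimpleGraph V} {S : Set ℕ} (hn : 1 ≤ n) (huv : u ≠ v)
    {k : ℕ} (hk : k ≤ n) (hS : IsLiftIndexSet T u v n k S) (hT : T ∈ spanningTrees G) :
    subdivLift T u v n S ∈ spanningTrees (subdiv G u v n) :=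
  ⟨subdivLift_le_subdiv hn huv hT.1 hS.subset_Iic, (isTree_subdivLift_iff hn huv hk hS).2 hT.2⟩

lemma exists_subdivLift_eq_of_mem_spanningTrees (hn : 1 ≤ n) (he : G.Adj u v)
    {T' : SimpleGraph (V ⊕ Fin n)} (hT' : T' ∈ spanningTrees (subdiv G u v n)) :
    (∃ T ∈ spanningTrees G, s(u, v) ∈ T.edgeSet ∧ subdivLift T u v n (Set.Iic n) = T') ∨
      ∃ k ≤ n, ∃ T ∈ spanningTrees G, s(u, v) ∉ T.edgeSet ∧
        subdivLift T u v n (Set.Iic n \ {k}) = T' := by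
  have huv := he.ne
  set B := T'.comap inl
  set S := {m | m ≤ n ∧ pathEdge u v n m ∈ T'.edgeSet}
  have hBG := edgeSet_comap_inl_subset hn huv hT'.1
  have hBe : s(u, v) ∉ B.edgeSet := fun h => (hBG h).2 rfl
  have hBG' : B ≤ G := SimpleGraph.edgeSet_subset_edgeSet.1 (hBG.trans Set.sdiff_subset)
  have hT'eq : subdivLift B u v n S = T' := (eq_subdivLift_comap_inl hn huv hT'.1).symm
  by_cases hall : Set.Iic n ⊆ S
  · left
    have hS : S = Set.Iic n := subset_antisymm (fun m hm => hm.1) hall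
    have heT : s(u, v) ∈ (B ⊔ SimpleGraph.edge u v).edgeSet := by
      simp [SimpleGraph.edgeSet_sup, SimpleGraph.edgeSet_edge_of_ne huv]
    have hlift : subdivLift (B ⊔ SimpleGraph.edge u v) u v n (Set.Iic n) = T' := by
      rw [subdivLift_sup_edge, ← hS, hT'eq]
    refine ⟨_, ⟨sup_le hBG' ((SimpleGraph.edge_le_iff _).2 (Or.inr he)), ?_⟩, heT, hlift⟩
    exact (isTree_subdivLift_iff hn huv le_rfl (Or.inl ⟨heT, rfl⟩)).1 (hlift ▸ hT'.2)
  · right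
    obtain ⟨k, hk, hkS⟩ := Set.not_subset.1 hall
    have hconn : (subdivLift B u v n S).Connected := hT'eq ▸ hT'.2.connected
    have hS : S = Set.Iic n \ {k} := by
      ext m
      refine ⟨fun hm => ⟨hm.1, fun h => hkS (h ▸ hm)⟩, fun ⟨hm, hmk⟩ => ?_⟩
      have hSn : S ⊆ Set.Iic n := fun m hm => hm.1
      rcases lt_or_gt_of_ne hmk with h | h
      · exact (mem_or_mem_of_connected_subdivLift huv hSn hconn h hk).resolve_right hkS
      · exact (mem_or_mem_of_connected_subdivLift huv hSn hconn h hm).resolve_left hkS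
    refine ⟨k, hk, B, ⟨hBG', ?_⟩, hBe, hS ▸ hT'eq⟩
    exact (isTree_subdivLift_iff hn huv hk (Or.inr ⟨hBe, hS⟩)).1 (hT'eq ▸ hT'.2)

end SpanningTrees

section Sums

variable {V : Type*} [Finite V] {u v : V} {n : ℕ} {G : SimpleGraph V}

theorem finsum_spanningTrees_subdiv {M : Type*} [AddCommMonoid M] (hn : 1 ≤ n) (he : G.Adj u v)
    (f : SimpleGraph (V ⊕ Fin n) → M) :
    ∑ᶠ T' ∈ spanningTrees (subdiv G u v n), f T' =
      ∑ᶠ T ∈ {T ∈ spanningTrees G | s(u, v) ∈ T.edgeSet},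
          f (subdivLift T u v n (Set.Iic n)) +
        ∑ᶠ k ∈ Set.Iic n, ∑ᶠ T ∈ {T ∈ spanningTrees G | s(u, v) ∉ T.edgeSet},
          f (subdivLift T u v n (Set.Iic n \ {k})) := by
  have huv := he.ne
  set A := {T ∈ spanningTrees G | s(u, v) ∈ T.edgeSet}
  set B := {T ∈ spanningTrees G | s(u, v) ∉ T.edgeSet}
  have hsplit : spanningTrees (subdiv G u v n) = (subdivLift · u v n (Set.Iic n)) '' A ∪
      ⋃ k ∈ Set.Iic n, (subdivLift · u v n (Set.Iic n \ {k})) '' B := by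
    ext T'
    constructor
    · intro hT'
      rcases exists_subdivLift_eq_of_mem_spanningTrees hn he hT' with
        ⟨T, hT, heT, rfl⟩ | ⟨k, hk, T, hT, heT, rfl⟩
      · exact Or.inl ⟨T, ⟨hT, heT⟩, rfl⟩
      · exact Or.inr (Set.mem_biUnion hk ⟨T, ⟨hT, heT⟩, rfl⟩)
    · rintro (⟨T, ⟨hT, heT⟩, rfl⟩ | hT')
      · exact subdivLift_mem_spanningTrees hn huv le_rfl (Or.inl ⟨heT, rfl⟩) hT
      · obtain ⟨k, hk, T, ⟨hT, heT⟩, rfl⟩ := Set.mem_iUnion₂.1 hT'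
        exact subdivLift_mem_spanningTrees hn huv hk (Or.inr ⟨heT, rfl⟩) hT
  have hdisj : Disjoint ((subdivLift · u v n (Set.Iic n)) '' A)
      (⋃ k ∈ Set.Iic n, (subdivLift · u v n (Set.Iic n \ {k})) '' B) := by
    rw [Set.disjoint_left]
    rintro _ ⟨T₁, -, rfl⟩ hT
    obtain ⟨k, hk, T₂, -, h⟩ := Set.mem_iUnion₂.1 hT
    dsimp only at h
    have hkT := pathEdge_mem_edgeSet_subdivLift hn huv (le_refl _) hk (T := T₁)
    rw [← h, pathEdge_mem_edgeSet_subdivLift hn huv Set.sdiff_subset hk] at hkT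
    exact absurd (Set.mem_Iic.1 hk) (by simpa using hkT)
  have hpairwise : (Set.Iic n).PairwiseDisjoint
      fun k => (subdivLift · u v n (Set.Iic n \ {k})) '' B := by
    intro k hk k' hk' hkk'
    rw [Function.onFun, Set.disjoint_left]
    rintro _ ⟨T₁, -, rfl⟩ ⟨T₂, -, h⟩
    dsimp only at h
    have hkT := pathEdge_mem_edgeSet_subdivLift hn huv Set.sdiff_subset hk' (T := T₁)
      (S := Set.Iic n \ {k})
    rw [← h, pathEdge_mem_edgeSet_subdivLift hn huv Set.sdiff_subset hk'] at hkT
    exact absurd (Set.mem_Iic.1 hk') (by simpa [hkk'.symm] using hkT)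
  rw [hsplit, finsum_mem_union hdisj (Set.toFinite _) (Set.toFinite _),
    finsum_mem_biUnion hpairwise (Set.finite_Iic n) fun _ _ => Set.toFinite _,
    finsum_mem_image fun T₁ h₁ T₂ h₂ h =>
      subdivLift_injective hn huv le_rfl h (iff_of_true h₁.2 h₂.2)]
  congr 1
  refine finsum_mem_congr rfl fun k _ => finsum_mem_image fun T₁ h₁ T₂ h₂ h =>
    subdivLift_injective hn huv Set.sdiff_subset h (iff_of_false h₁.2 h₂.2)

theorem finsum_signed_spanningTrees_subdiv (hn : 1 ≤ n) (he : G.Adj u v) {σ : Sym2 V → ℤ}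
    (hσ : σ s(u, v) = 1) :
    ∑ᶠ T' ∈ spanningTrees (subdiv G u v n), (-1 : ℤ) ^ posCount (subdivSign σ) T' =
      (-1) ^ n *
        (∑ᶠ T ∈ {T ∈ spanningTrees G | s(u, v) ∈ T.edgeSet}, (-1) ^ posCount σ T +
          (n + 1) * ∑ᶠ T ∈ {T ∈ spanningTrees G | s(u, v) ∉ T.edgeSet},
            (-1) ^ posCount σ T) := by
  have huv := he.ne
  have hA : ∀ T ∈ {T ∈ spanningTrees G | s(u, v) ∈ T.edgeSet},
      (-1 : ℤ) ^ posCount (subdivSign σ) (subdivLift T u v n (Set.Iic n)) =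
        (-1) ^ n * (-1) ^ posCount σ T := fun T hT => by
    rw [posCount_subdivLift hn huv le_rfl (Or.inl ⟨hT.2, rfl⟩) hσ, pow_add, mul_comm]
  have hB : ∀ k ∈ Set.Iic n, ∀ T ∈ {T ∈ spanningTrees G | s(u, v) ∉ T.edgeSet},
      (-1 : ℤ) ^ posCount (subdivSign σ) (subdivLift T u v n (Set.Iic n \ {k})) =
        (-1) ^ n * (-1) ^ posCount σ T := fun k hk T hT => by
    rw [posCount_subdivLift hn huv hk (Or.inr ⟨hT.2, rfl⟩) hσ, pow_add, mul_comm]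
  rw [finsum_spanningTrees_subdiv hn he, finsum_mem_congr rfl hA,
    finsum_mem_congr rfl fun k hk => finsum_mem_congr rfl (hB k hk), ← mul_finsum_mem,
    ← mul_finsum_mem, ← Finset.coe_Iic, finsum_mem_coe_finset, Finset.sum_const, Nat.card_Iic,
    nsmul_eq_mul]
  push_cast
  ring

end Sums

theorem abs_subdiv_signed_tree_sum_general {V : Type*} [Fintype V] (G : SimpleGraph V)
    (σ : Sym2 V → ℤ)
    (u v : V) (he : G.Adj u v) (hsign : σ s(u, v) = 1)
    (n : ℕ) (hn : 1 ≤ n) (x y : ℤ)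
    (hx : x = ∑ᶠ T ∈ {T ∈ spanningTrees G | s(u, v) ∈ T.edgeSet},
        (-1 : ℤ) ^ posCount σ T)
    (hy : y = ∑ᶠ T ∈ {T ∈ spanningTrees G | s(u, v) ∉ T.edgeSet},
        (-1 : ℤ) ^ posCount σ T)
    (hxy : |x + y| = |x| + |y|) :
    |∑ᶠ T' ∈ spanningTrees (subdiv G u v n),
        (-1 : ℤ) ^ posCount (subdivSign σ) T'| =
      |x| + ((n : ℤ) + 1) * |y| := by
  rw [finsum_signed_spanningTrees_subdiv hn he hsign, ← hx, ← hy, abs_mul, abs_pow, abs_neg,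
    abs_one, one_pow, one_mul]
  exact abs_add_mul_eq_of_abs_add_eq (by positivity) hxy

/-- If `x` (the sum of `(-1)^{v(T)}` over spanning trees of `G` containing
`e`) and `y` (the corresponding sum over spanning trees not containing `e`)
satisfy `|x + y| = |x| + |y|`, then the absolute value of the sum of
`(-1)^{v(T')}` over all spanning trees `T'` of `G^n` equals
`|x| + (n+1) * |y|`. -/
theorem abs_subdiv_signed_tree_sum {V : Type*} [Fintype V] (G : SimpleGraph V)
    (hG : G.Connected) (σ : Sym2 V → ℤ)
    (hσ : ∀ ed ∈ G.edgeSet, σ ed = 1 ∨ σ ed = -1)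
    (u v : V) (he : G.Adj u v) (hsign : σ s(u, v) = 1)
    (n : ℕ) (hn : 1 ≤ n) (x y : ℤ)
    (hx : x = ∑ᶠ T ∈ {T ∈ spanningTrees G | s(u, v) ∈ T.edgeSet},
        (-1 : ℤ) ^ posCount σ T)
    (hy : y = ∑ᶠ T ∈ {T ∈ spanningTrees G | s(u, v) ∉ T.edgeSet},
        (-1 : ℤ) ^ posCount σ T)
    (hxy : |x + y| = |x| + |y|) :
    |∑ᶠ T' ∈ spanningTrees (subdiv G u v n),
        (-1 : ℤ) ^ posCount (subdivSign σ) T'| =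
      |x| + ((n : ℤ) + 1) * |y| :=
  abs_subdiv_signed_tree_sum_general G σ u v he hsign n hn x y hx hy hxy
end
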